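/- Let g > 1 and a ≥ 0 be real numbers, set α = 2 + (1+a)/(g−1), and for integers k ≥ 1 define p_k = (B(k+a, 1+(g+a)/(g−1)) / B(1+a, 1+(g+a)/(g−1))) · (g+a)/(g−1+g(1+a)), where B is the Beta function. Then the sequence p_k is asymptotically a power law with exponent α: the quantity p_k · k^{α} converges, as k → ∞, to the positive constant Γ(1+(g+a)/(g−1)) / B(1+a, 1+(g+a)/(g−1)) · (g+a)/(g−1+g(1+a)). In particular, for a = 0 and g = c·s the exponent is α = 2 + 1/(c·s − 1). -/

import Mathlib

/-!
Writing `t = 1 + (g+a)/(g-1)`, which equals `α`, the quantity `p_k · k^α` is the constant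
`Γ(t) / B(1+a, t) · (g+a)/(g-1+g(1+a))` times `k^t Γ(k+a) / Γ(k+a+t)`, and the latter ratio
tends to `1`. That limit follows from Euler's limit formula `Γ(s) = lim n^s n! / ∏_{j ≤ n} (s+j)`
applied at `s = b` and `s = b + t`: the quotient of the two sequences is `n^t Γ(b+n+1) / Γ(b+t+n+1)`
up to the constant `Γ(b+t)/Γ(b)`.
-/

open Filter Topology Real
open scoped Nat

/-- The Beta function `B(x,y) = Γ(x)Γ(y)/Γ(x+y)`. -/
noncomputable def Beta (x y : ℝ) : ℝ :=
  Real.Gamma x * Real.Gamma y / Real.Gamma (x + y)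

/-- The closed-form facet degree distribution of GeneSCs:
`p_k = (B(k+a, 1+(g+a)/(g−1)) / B(1+a, 1+(g+a)/(g−1))) · (g+a)/(g−1+g(1+a))`. -/
noncomputable def facetDegreeDist (g a : ℝ) (k : ℕ) : ℝ :=
  (Beta ((k : ℝ) + a) (1 + (g + a) / (g - 1)) /
    Beta (1 + a) (1 + (g + a) / (g - 1))) * ((g + a) / (g - 1 + g * (1 + a)))

lemma Beta_pos {x y : ℝ} (hx : 0 < x) (hy : 0 < y) : 0 < Beta x y := by
  have := Gamma_pos_of_pos hx
  have := Gamma_pos_of_pos hy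
  have := Gamma_pos_of_pos (add_pos hx hy)
  unfold Beta
  positivity

lemma Gamma_add_nat_eq_mul_prod {s : ℝ} (hs : 0 < s) (n : ℕ) :
    Gamma (s + n) = Gamma s * ∏ j ∈ Finset.range n, (s + j) := by
  induction n with
  | zero => simp
  | succ n ih =>
    rw [Nat.cast_succ, ← add_assoc, Gamma_add_one (by positivity), ih, Finset.prod_range_succ]
    ring

lemma GammaSeq_eq_div {s : ℝ} (hs : 0 < s) (n : ℕ) :
    GammaSeq s n = (n : ℝ) ^ s * n ! * Gamma s / Gamma (s + (n + 1)) := by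
  have hprod := Gamma_add_nat_eq_mul_prod hs (n + 1)
  push_cast at hprod
  have := Gamma_pos_of_pos hs
  rw [GammaSeq, hprod]
  field_simp

lemma tendsto_rpow_mul_Gamma_div_Gamma_add_nat {b t : ℝ} (hb : 0 < b) (hbt : 0 < b + t) :
    Tendsto (fun n : ℕ => (n : ℝ) ^ t * Gamma (b + (n + 1)) / Gamma (b + t + (n + 1)))
      atTop (𝓝 1) := by
  have hΓb := Gamma_pos_of_pos hb
  have hΓbt := Gamma_pos_of_pos hbt
  have euler := ((GammaSeq_tendsto_Gamma (b + t)).div (GammaSeq_tendsto_Gamma b)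
    hΓb.ne').mul_const (Gamma b / Gamma (b + t))
  rw [div_mul_div_cancel₀ hΓb.ne', div_self hΓbt.ne'] at euler
  refine euler.congr' ?_
  filter_upwards [eventually_gt_atTop 0] with n hn
  have hn : (0 : ℝ) < n := Nat.cast_pos.mpr hn
  have := Gamma_pos_of_pos (show 0 < b + (n + 1) by positivity)
  have := Gamma_pos_of_pos (show 0 < b + t + (n + 1) by positivity)
  have := rpow_pos_of_pos hn b
  have : (0 : ℝ) < n ! := Nat.cast_pos.mpr n.factorial_pos
  rw [Pi.div_apply, GammaSeq_eq_div hb, GammaSeq_eq_div hbt, rpow_add hn]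
  field_simp

theorem tendsto_rpow_mul_Gamma_div_Gamma (c t : ℝ) :
    Tendsto (fun k : ℕ => (k : ℝ) ^ t * Gamma (k + c) / Gamma (k + c + t)) atTop (𝓝 1) := by
  -- With `k = n + N`, the shifted base `b = N + c - 1` and `b + t` are positive, and
  -- `(n / (n + N))^t → 1` accounts for replacing `k^t` by `n^t`.
  obtain ⟨N, hN⟩ := exists_nat_gt (max (1 - c) (1 - c - t))
  rw [max_lt_iff] at hN
  have ratio := tendsto_rpow_mul_Gamma_div_Gamma_add_nat (b := N + c - 1) (t := t)
    (by linarith) (by linarith)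
  have shift := (continuousAt_rpow_const 1 t (Or.inl one_ne_zero)).tendsto.comp
    (tendsto_natCast_div_add_atTop (N : ℝ))
  rw [one_rpow] at shift
  rw [← tendsto_add_atTop_iff_nat N]
  have limit := ratio.div shift one_ne_zero
  rw [div_one] at limit
  refine limit.congr' ?_
  filter_upwards [eventually_gt_atTop 0] with n hn
  have hn : (0 : ℝ) < n := Nat.cast_pos.mpr hn
  have := rpow_pos_of_pos hn t
  have := rpow_pos_of_pos (show (0 : ℝ) < n + N by positivity) t
  rw [Pi.div_apply, Function.comp_apply, div_rpow hn.le (by positivity), Nat.cast_add,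
    show (N : ℝ) + c - 1 + (n + 1) = n + N + c by ring,
    show (N : ℝ) + c - 1 + t + (n + 1) = n + N + c + t by ring]
  field_simp

/-- For `g > 1`, `a ≥ 0` and `α = 2 + (1+a)/(g−1)`, the sequence `p_k`
is asymptotically a power law with exponent `α`: `p_k · k^α` converges, as `k → ∞`, to
the positive constant `Γ(1+(g+a)/(g−1)) / B(1+a, 1+(g+a)/(g−1)) · (g+a)/(g−1+g(1+a))`.
In particular, for `a = 0` and `g = c·s` the exponent is `α = 2 + 1/(c·s − 1)`. -/
theorem facet_degree_power_law (g a : ℝ) (hg : 1 < g) (ha : 0 ≤ a)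
    (α : ℝ) (hα : α = 2 + (1 + a) / (g - 1)) :
    (0 < Real.Gamma (1 + (g + a) / (g - 1)) / Beta (1 + a) (1 + (g + a) / (g - 1)) *
        ((g + a) / (g - 1 + g * (1 + a))) ∧
      Filter.Tendsto (fun k : ℕ => facetDegreeDist g a k * (k : ℝ) ^ α)
        Filter.atTop
        (nhds (Real.Gamma (1 + (g + a) / (g - 1)) / Beta (1 + a) (1 + (g + a) / (g - 1)) *
          ((g + a) / (g - 1 + g * (1 + a)))))) ∧
    (∀ c s : ℝ, a = 0 → g = c * s → α = 2 + 1 / (c * s - 1)) := by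
  set t := 1 + (g + a) / (g - 1)
  have hg1 : 0 < g - 1 := by linarith
  have ht : 0 < t := by positivity
  have hαt : α = t := by
    rw [hα]
    simp only [t]
    field_simp
    ring
  refine ⟨⟨?_, ?_⟩, fun c s ha0 hgcs => by rw [hα, ha0, ← hgcs]; ring⟩
  · have := Gamma_pos_of_pos ht
    have := Beta_pos (by linarith : 0 < 1 + a) ht
    have : 0 < g - 1 + g * (1 + a) := by nlinarith
    positivity
  · have limit := (tendsto_rpow_mul_Gamma_div_Gamma a t).mul_const
      (Gamma t / Beta (1 + a) t * ((g + a) / (g - 1 + g * (1 + a))))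
    rw [one_mul] at limit
    refine limit.congr fun k => ?_
    simp only [facetDegreeDist, Beta, hαt]
    ring
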